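/- Let G be a graph and A a tree-decomposition of G whose every induced separator is a clique of G. For each node i with bag A_i, let G_i be obtained from G[A_i] by adding edges of K(N(C)) for every component C of G \ A_i. Then tw(G) = max_i tw(G_i). -/

import Mathlib

open SimpleGraph

/-- A tree-decomposition of `G`: a tree `T` with bags satisfying the
vertex-cover, edge-cover and connectivity (running intersection) conditions. -/
def IsTreeDecomp {V ι : Type} (G : SimpleGraph V) (T : SimpleGraph ι) (bag : ι → Set V) : Prop :=
  T.Connected ∧ T.IsAcyclic ∧
  (∀ v : V, ∃ i, v ∈ bag i) ∧
  (∀ u v : V, G.Adj u v → ∃ i, u ∈ bag i ∧ v ∈ bag i) ∧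
  (∀ v : V, (T.induce {i | v ∈ bag i}).Connected)

/-- Treewidth: the least `k` such that `G` has a tree-decomposition all of whose
bags have at most `k + 1` vertices. -/
noncomputable def tw {V : Type} (G : SimpleGraph V) : ℕ :=
  sInf {k | ∃ (ι : Type) (T : SimpleGraph ι) (bag : ι → Set V),
    IsTreeDecomp G T bag ∧ ∀ i, (bag i).ncard ≤ k + 1}

/-- `S` separates `u` from `v` in `G`: both are outside `S` and every walk meets `S`. -/
def Separates {V : Type} (G : SimpleGraph V) (S : Set V) (u v : V) : Prop :=
  u ∉ S ∧ v ∉ S ∧ ∀ p : G.Walk u v, ∃ x ∈ p.support, x ∈ S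

/-- A minimal separator: a minimal `a`–`b` separator for some `a`, `b`. -/
def IsMinSeparator {V : Type} (G : SimpleGraph V) (S : Set V) : Prop :=
  ∃ a b, Separates G S a b ∧ ∀ S' ⊂ S, ¬ Separates G S' a b

/-- Contraction of `G` by (the edge set of) `F`: vertices are the connected
components of `F`; two distinct components are adjacent iff some vertex of one is
`G`-adjacent to some vertex of the other. -/
def contractBy {V : Type} (G F : SimpleGraph V) : SimpleGraph F.ConnectedComponent where
  Adj C D := C ≠ D ∧ ∃ u v : V,
    F.connectedComponentMk u = C ∧ F.connectedComponentMk v = D ∧ G.Adj u v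
  symm := by constructor; rintro C D ⟨h, u, v, hu, hv, huv⟩; exact ⟨h.symm, v, u, hv, hu, huv.symm⟩
  loopless := by constructor; rintro C ⟨h, -⟩; exact h rfl

/-- `G` with the extra edge `{u, v}` added. -/
def addEdge {V : Type} (G : SimpleGraph V) (u v : V) : SimpleGraph V :=
  G ⊔ fromEdgeSet {s(u, v)}

/-- `H` is a minor of `G`: disjoint nonempty connected branch sets in `G`,
one for each vertex of `H`, with edges of `H` realized between branch sets. -/
def IsMinorOf {W V : Type} (H : SimpleGraph W) (G : SimpleGraph V) : Prop :=
  ∃ B : W → Set V,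
    (∀ w, (B w).Nonempty) ∧
    (∀ w, (G.induce (B w)).Connected) ∧
    (∀ w₁ w₂, w₁ ≠ w₂ → Disjoint (B w₁) (B w₂)) ∧
    (∀ w₁ w₂, H.Adj w₁ w₂ → ∃ u ∈ B w₁, ∃ v ∈ B w₂, G.Adj u v)

/-- Chordality: every cycle of length at least 4 has a chord. -/
def IsChordal {V : Type} (H : SimpleGraph V) : Prop :=
  ∀ ⦃v : V⦄ (c : H.Walk v v), c.IsCycle → 4 ≤ c.length →
    ∃ x y, x ∈ c.support ∧ y ∈ c.support ∧ H.Adj x y ∧ s(x, y) ∉ c.edges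

/-- `H` is a minimal triangulation of `G`. -/
def IsMinimalTriangulation {V : Type} (G H : SimpleGraph V) : Prop :=
  IsChordal H ∧ G ≤ H ∧ ∀ H' : SimpleGraph V, IsChordal H' → G ≤ H' → H' ≤ H → H' = H

/-- `X` is a maximal clique of `H`. -/
def IsMaximalClique {V : Type} (H : SimpleGraph V) (X : Set V) : Prop :=
  H.IsClique X ∧ ∀ Y, H.IsClique Y → X ⊆ Y → X = Y

/-- `X` is a potential maximal clique of `G`. -/
def IsPMC {V : Type} (G : SimpleGraph V) (X : Set V) : Prop :=
  ∃ H, IsMinimalTriangulation G H ∧ IsMaximalClique H X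

/-- The vertex set of the component `C` of `G \ S`. -/
def compSet {V : Type} (G : SimpleGraph V) (S : Set V)
    (C : (G.induce Sᶜ).ConnectedComponent) : Set V :=
  {v : V | ∃ h : v ∈ Sᶜ, (G.induce Sᶜ).connectedComponentMk ⟨v, h⟩ = C}

/-- The open neighborhood of a vertex set `W` in `G`. -/
def nbhdSet {V : Type} (G : SimpleGraph V) (W : Set V) : Set V :=
  {v | v ∉ W ∧ ∃ u ∈ W, G.Adj u v}

/-- The induced subgraph on `U` with `S` completed into a clique. -/
def completedOn {V : Type} (G : SimpleGraph V) (U S : Set V) : SimpleGraph U where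
  Adj a b := a ≠ b ∧ (G.Adj (a : V) (b : V) ∨ ((a : V) ∈ S ∧ (b : V) ∈ S))
  symm := by
    constructor
    rintro a b ⟨h1, h2⟩
    refine ⟨h1.symm, ?_⟩
    rcases h2 with h | h
    · exact Or.inl h.symm
    · exact Or.inr ⟨h.2, h.1⟩
  loopless := by constructor; rintro a ⟨h, -⟩; exact h rfl

/-- The graph on `U` obtained from `G[U]` by adding the edges of the complete graph
`K(N(C))` for every component `C` of `G \ U`. -/
def realized {V : Type} (G : SimpleGraph V) (U : Set V) : SimpleGraph U where
  Adj a b := a ≠ b ∧ (G.Adj (a : V) (b : V) ∨ ∃ C : (G.induce Uᶜ).ConnectedComponent,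
    (a : V) ∈ nbhdSet G (compSet G U C) ∧ (b : V) ∈ nbhdSet G (compSet G U C))
  symm := by
    constructor
    rintro a b ⟨h1, h2⟩
    refine ⟨h1.symm, ?_⟩
    rcases h2 with h | ⟨C, hx, hy⟩
    · exact Or.inl h.symm
    · exact Or.inr ⟨C, hy, hx⟩
  loopless := by constructor; rintro a ⟨h, -⟩; exact h rfl

/-!
Every component `C` of `G - A i` lives in the bags of a single branch of the tree at `i`, so
`N(C) ⊆ A i ∩ A j` for the neighbour `j` of `i` in that branch. That separator is a clique, so
`G_i = G[A i]`, whence `tw G_i ≤ tw G`. Conversely, each clique separator `A i ∩ A j` lies in one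
bag of an optimal tree-decomposition of `G[A i]` (Helly property of subtrees); joining these bags
along the edges of `T` glues the decompositions of all `G[A i]` into one of `G` of width
`max_i tw G[A i]`.
-/

section Treewidth

variable {V W ι : Type} {G : SimpleGraph V}

lemma tw_le_of_isTreeDecomp {T : SimpleGraph ι} {bag : ι → Set V} {k : ℕ}
    (htd : IsTreeDecomp G T bag) (hk : ∀ i, (bag i).ncard ≤ k + 1) : tw G ≤ k :=
  Nat.sInf_le ⟨ι, T, bag, htd, hk⟩

lemma exists_isTreeDecomp_ncard_le_tw (G : SimpleGraph V) :
    ∃ (ι : Type) (T : SimpleGraph ι) (bag : ι → Set V),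
      IsTreeDecomp G T bag ∧ ∀ i, (bag i).ncard ≤ tw G + 1 := by
  refine Nat.sInf_mem (s := {k | ∃ (ι : Type) (T : SimpleGraph ι) (bag : ι → Set V),
    IsTreeDecomp G T bag ∧ ∀ i, (bag i).ncard ≤ k + 1}) ⟨Nat.card V, Unit, ⊥, fun _ => Set.univ,
    ⟨.of_subsingleton, isAcyclic_bot, fun _ => ⟨(), trivial⟩, fun _ _ _ => ⟨(), trivial, trivial⟩,
      fun v => ?_⟩, fun _ => by rw [Set.ncard_univ]; omega⟩
  have : Nonempty {i : Unit | v ∈ (Set.univ : Set V)} := ⟨⟨(), trivial⟩⟩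
  exact .of_subsingleton

lemma tw_le_tw_of_embedding [Finite V] {H : SimpleGraph W} (f : H ↪g G) : tw H ≤ tw G := by
  obtain ⟨ι, T, bag, ⟨hT, hacyc, hcover, hedge, hsub⟩, hwidth⟩ := exists_isTreeDecomp_ncard_le_tw G
  refine tw_le_of_isTreeDecomp (T := T) (bag := fun i => f ⁻¹' bag i)
    ⟨hT, hacyc, fun v => hcover (f v), fun u v huv => hedge _ _ (f.map_adj_iff.mpr huv),
      fun v => hsub (f v)⟩ fun i => ?_
  calc (f ⁻¹' bag i).ncard = (f '' (f ⁻¹' bag i)).ncard :=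
        (Set.ncard_image_of_injective _ f.injective).symm
    _ ≤ (bag i).ncard := Set.ncard_le_ncard (Set.image_preimage_subset _ _)
    _ ≤ tw G + 1 := hwidth i

end Treewidth

namespace SimpleGraph

variable {ι : Type} {T : SimpleGraph ι}

lemma Preconnected.exists_walk_support_subset_of_induce {S : Set ι}
    (hS : (T.induce S).Preconnected) {a b : ι} (ha : a ∈ S) (hb : b ∈ S) :
    ∃ p : T.Walk a b, ∀ x ∈ p.support, x ∈ S := by
  obtain ⟨p⟩ := hS ⟨a, ha⟩ ⟨b, hb⟩
  refine ⟨p.map (Embedding.induce S).toHom, fun x hx => ?_⟩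
  obtain ⟨y, -, rfl⟩ := List.mem_map.mp (Walk.support_map _ p ▸ hx)
  exact y.2

lemma IsAcyclic.support_subset_of_isPath (hT : T.IsAcyclic) {S : Set ι}
    (hS : (T.induce S).Preconnected) {a b : ι} (ha : a ∈ S) (hb : b ∈ S) {p : T.Walk a b}
    (hp : p.IsPath) : ∀ x ∈ p.support, x ∈ S := by
  classical
  obtain ⟨q, hq⟩ := hS.exists_walk_support_subset_of_induce ha hb
  have hpq : p = q.bypass :=
    congrArg Subtype.val ((hT.subsingleton_path a b).elim ⟨p, hp⟩ ⟨_, q.bypass_isPath⟩)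
  exact fun x hx => hq x (q.support_bypass_subset_support (hpq ▸ hx))

/-- `x` is the gate of `S` seen from `t`, i.e. its point nearest to `t`. -/
lemma IsAcyclic.mem_support_of_isPath_of_gate (hT : T.IsAcyclic) {S : Set ι}
    (hS : (T.induce S).Preconnected) {t x s : ι} {p : T.Walk t x} (hp : p.IsPath) (hx : x ∈ S)
    (hgate : ∀ y ∈ p.support, y ∈ S → y = x) (hs : s ∈ S) {q : T.Walk t s} (hq : q.IsPath) :
    x ∈ q.support := by
  classical
  obtain ⟨r, hr⟩ := hS.exists_walk_support_subset_of_induce hx hs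
  have hrS : ∀ y ∈ r.bypass.support, y ∈ S := fun y hy => hr y (r.support_bypass_subset_support hy)
  have hxr : x ∉ r.bypass.support.tail := by
    have := r.bypass_isPath.support_nodup
    rw [← Walk.cons_tail_support] at this
    exact (List.nodup_cons.mp this).1
  have hpr : (p.append r.bypass).IsPath := by
    rw [Walk.isPath_def, Walk.support_append]
    refine hp.support_nodup.append (r.bypass_isPath.support_nodup.sublist (List.tail_sublist _))
      fun y hyp hyr => hxr ?_
    exact hgate y hyp (hrS y (List.mem_of_mem_tail hyr)) ▸ hyr
  have hq : q = p.append r.bypass :=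
    congrArg Subtype.val ((hT.subsingleton_path t s).elim ⟨q, hq⟩ ⟨_, hpr⟩)
  rw [hq, Walk.mem_support_append_iff]
  exact Or.inl p.end_mem_support

lemma IsAcyclic.snd_eq_of_walk_avoiding (hT : T.IsAcyclic) {i j m : ι} {q : T.Walk i m}
    (hq : q.IsPath) (hij : T.Adj i j) (w : T.Walk j m) (hw : i ∉ w.support) : q.snd = j := by
  classical
  have hpath : (Walk.cons hij w.bypass).IsPath :=
    w.bypass_isPath.cons fun h => hw (w.support_bypass_subset_support h)
  have := congrArg Subtype.val ((hT.subsingleton_path i m).elim ⟨q, hq⟩ ⟨_, hpath⟩)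
  simp only at this
  rw [this, Walk.snd_cons]

lemma Walk.exists_edges_subset_map {V W : Type} {G : SimpleGraph V} {H : SimpleGraph W}
    (f : V → W) (hf : ∀ ⦃x y⦄, G.Adj x y → f x = f y ∨ H.Adj (f x) (f y)) {u v : V}
    (p : G.Walk u v) : ∃ q : H.Walk (f u) (f v), q.edges ⊆ p.edges.map (Sym2.map f) := by
  induction p with
  | nil => exact ⟨.nil, by simp⟩
  | @cons x y z hxy p ih =>
    obtain ⟨q, hq⟩ := ih
    rcases hf hxy with h | h
    · exact ⟨q.copy h.symm rfl, by simpa using List.Subset.trans hq (List.subset_cons_self _ _)⟩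
    · exact ⟨.cons h q, by simpa using List.cons_subset_cons _ hq⟩

lemma Walk.IsCycle.not_support_subset_of_isAcyclic_induce {V : Type} {G : SimpleGraph V}
    {s : Set V} (hs : (G.induce s).IsAcyclic) {v : V} {p : G.Walk v v} (hp : p.IsCycle) :
    ¬ ∀ x ∈ p.support, x ∈ s := fun hsub => by
  apply hs (p.induce s hsub)
  have hinj : Function.Injective (Embedding.induce (G := G) s).toHom := Subtype.val_injective
  rwa [← Walk.isCycle_map_iff_of_injective hinj, Walk.map_induce]

end SimpleGraph

lemma nbhdSet_compSet_subset {V : Type} (G : SimpleGraph V) (S : Set V)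
    (C : (G.induce Sᶜ).ConnectedComponent) : nbhdSet G (compSet G S C) ⊆ S := by
  rintro u ⟨huC, c, ⟨hc, rfl⟩, hcu⟩
  by_contra hu
  exact huC ⟨hu, (ConnectedComponent.connectedComponentMk_eq_of_adj
    (show (G.induce Sᶜ).Adj ⟨c, hc⟩ ⟨u, hu⟩ from hcu)).symm⟩

namespace IsTreeDecomp

variable {V ι : Type} {G : SimpleGraph V} {T : SimpleGraph ι} {bag : ι → Set V}

lemma exists_walk_avoiding_of_reachable (htd : IsTreeDecomp G T bag) {i : ι}
    {x y : ↥(bag i)ᶜ} (hxy : (G.induce (bag i)ᶜ).Reachable x y) {m m' : ι}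
    (hm : ↑x ∈ bag m) (hm' : ↑y ∈ bag m') : ∃ w : T.Walk m m', i ∉ w.support := by
  obtain ⟨-, -, -, hedge, hsub⟩ := htd
  have within : ∀ (z : ↥(bag i)ᶜ) {m m' : ι}, ↑z ∈ bag m → ↑z ∈ bag m' →
      ∃ w : T.Walk m m', i ∉ w.support := fun z m m' hm hm' => by
    obtain ⟨w, hw⟩ := (hsub z).preconnected.exists_walk_support_subset_of_induce hm hm'
    exact ⟨w, fun hi => z.2 (hw i hi)⟩
  obtain ⟨p⟩ := hxy
  induction p generalizing m with
  | nil => exact within _ hm hm'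
  | @cons x z y hxz p ih =>
    obtain ⟨m'', hxm'', hzm''⟩ := hedge _ _ hxz
    obtain ⟨w₁, hw₁⟩ := within x hm hxm''
    obtain ⟨w₂, hw₂⟩ := ih hzm'' hm'
    exact ⟨w₁.append w₂, by simp [Walk.mem_support_append_iff, hw₁, hw₂]⟩

lemma exists_adj_nbhdSet_compSet_subset (htd : IsTreeDecomp G T bag) (i : ι)
    (C : (G.induce (bag i)ᶜ).ConnectedComponent) :
    ∃ j, T.Adj i j ∧ nbhdSet G (compSet G (bag i) C) ⊆ bag i ∩ bag j := by
  have ⟨hT, hacyc, hcover, hedge, hsub⟩ := htd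
  obtain ⟨c, rfl⟩ := C.exists_rep
  obtain ⟨m, hcm⟩ := hcover c
  have hmi : m ≠ i := by rintro rfl; exact c.2 hcm
  obtain ⟨p, hp⟩ := hT.exists_isPath i m
  have hpn : ¬ p.Nil := Walk.not_nil_of_ne hmi.symm
  have hpi : i ∉ p.tail.support := by
    have := hp.support_nodup
    rw [← p.cons_support_tail hpn] at this
    exact (List.nodup_cons.mp this).1
  -- every path from `i` to a bag meeting `C` leaves `i` through `p.snd`
  refine ⟨p.snd, p.adj_snd hpn, fun u hu => ?_⟩
  have hui := nbhdSet_compSet_subset G _ _ hu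
  obtain ⟨-, c', ⟨hc', hc'C⟩, hc'u⟩ := hu
  obtain ⟨m', hc'm', hum'⟩ := hedge _ _ hc'u
  obtain ⟨q, hq⟩ := hT.exists_isPath i m'
  obtain ⟨w, hw⟩ := htd.exists_walk_avoiding_of_reachable
    (ConnectedComponent.exact hc'C.symm) hcm hc'm'
  have hsnd : q.snd = p.snd := hacyc.snd_eq_of_walk_avoiding hq (p.adj_snd hpn) (p.tail.append w)
    (by simp [Walk.mem_support_append_iff, hpi, hw])
  exact ⟨hui, hsnd ▸ hacyc.support_subset_of_isPath (hsub u).preconnected hui hum' hq _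
    (q.getVert_mem_support 1)⟩

lemma realized_eq_induce (htd : IsTreeDecomp G T bag)
    (hcl : ∀ i j, T.Adj i j → G.IsClique (bag i ∩ bag j)) (i : ι) :
    realized G (bag i) = G.induce (bag i) := by
  ext a b
  refine ⟨fun ⟨hab, h⟩ => h.elim id fun ⟨C, ha, hb⟩ => ?_, fun h => ⟨h.ne, Or.inl h⟩⟩
  obtain ⟨j, hij, hC⟩ := htd.exists_adj_nbhdSet_compSet_subset i C
  exact hcl i j hij (hC ha) (hC hb) (Subtype.val_injective.ne hab)

lemma exists_subset_bag_of_isClique (htd : IsTreeDecomp G T bag) {K : Set V} (hKfin : K.Finite)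
    (hK : G.IsClique K) : ∃ t, K ⊆ bag t := by
  classical
  obtain ⟨hT, hacyc, hcover, hedge, hsub⟩ := htd
  induction K, hKfin using Set.Finite.induction_on with
  | empty => exact ⟨hT.nonempty.some, Set.empty_subset _⟩
  | @insert w K hwK hKfin ih =>
    obtain ⟨t, ht⟩ := ih (hK.subset (Set.subset_insert _ _))
    obtain ⟨s, hs⟩ := hcover w
    obtain ⟨p, hp⟩ := hT.exists_isPath t s
    -- the first node `x` on the path from `t` to `s` whose bag contains `w`
    obtain ⟨x, hx, hxp, hgate⟩ := p.exists_mem_support_forall_mem_support_imp_eq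
      {y ∈ p.support.toFinset | w ∈ bag y} ⟨s, by simp [hs]⟩
    simp only [Finset.mem_filter, List.mem_toFinset] at hx hgate
    refine ⟨x, Set.insert_subset hx.2 fun w' hw' => ?_⟩
    obtain ⟨s', hws', hw's'⟩ :=
      hedge w w' (hK (.inl rfl) (.inr hw') (by rintro rfl; exact hwK hw'))
    obtain ⟨q, hq⟩ := hT.exists_isPath t s'
    have hxq : x ∈ q.support := hacyc.mem_support_of_isPath_of_gate (hsub w).preconnected
      (hp.takeUntil hxp) hx.2
      (fun y hy hyw => hgate y ⟨p.support_takeUntil_subset_support hxp hy, hyw⟩ hy) hws' hq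
    exact hacyc.support_subset_of_isPath (hsub w').preconnected (ht hw') hw's' hq x hxq

end IsTreeDecomp

namespace SimpleGraph

variable {ι : Type} {κ : ι → Type}

def glue (T : SimpleGraph ι) (S : ∀ i, SimpleGraph (κ i)) (c : ∀ i, ι → κ i) :
    SimpleGraph (Σ i, κ i) where
  Adj x y := (∃ i a b, (S i).Adj a b ∧ x = ⟨i, a⟩ ∧ y = ⟨i, b⟩) ∨
    (T.Adj x.1 y.1 ∧ x.2 = c x.1 y.1 ∧ y.2 = c y.1 x.1)
  symm := by
    constructor
    rintro x y (⟨i, a, b, h, rfl, rfl⟩ | ⟨h, hx, hy⟩)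
    · exact .inl ⟨i, b, a, h.symm, rfl, rfl⟩
    · exact .inr ⟨h.symm, hy, hx⟩
  loopless := by
    constructor
    rintro x (⟨i, a, b, h, rfl, hab⟩ | ⟨h, -⟩)
    · cases hab
      exact h.ne rfl
    · exact h.ne rfl

variable {T : SimpleGraph ι} {S : ∀ i, SimpleGraph (κ i)} {c : ∀ i, ι → κ i}

lemma glue_adj_mk_mk {i : ι} {a b : κ i} : (glue T S c).Adj ⟨i, a⟩ ⟨i, b⟩ ↔ (S i).Adj a b := by
  refine ⟨?_, fun h => .inl ⟨i, a, b, h, rfl, rfl⟩⟩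
  rintro (⟨j, a', b', h, ha, hb⟩ | ⟨h, -⟩)
  · cases ha
    cases hb
    exact h
  · exact absurd rfl h.ne

lemma glue_adj_of_fst_ne {x y : Σ i, κ i} (h : (glue T S c).Adj x y) (hne : x.1 ≠ y.1) :
    T.Adj x.1 y.1 ∧ x.2 = c x.1 y.1 ∧ y.2 = c y.1 x.1 := by
  rcases h with ⟨i, a, b, -, rfl, rfl⟩ | h
  · exact absurd rfl hne
  · exact h

lemma glue_eq_of_adj_of_fst_eq {x y x' y' : Σ i, κ i} (h : (glue T S c).Adj x y)
    (h' : (glue T S c).Adj x' y') (hx : x.1 = x'.1) (hy : y.1 = y'.1) (hne : x.1 ≠ y.1) :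
    x = x' ∧ y = y' := by
  obtain ⟨-, hx₂, hy₂⟩ := glue_adj_of_fst_ne h hne
  obtain ⟨-, hx₂', hy₂'⟩ := glue_adj_of_fst_ne h' (hx ▸ hy ▸ hne)
  obtain ⟨i, a⟩ := x
  obtain ⟨j, b⟩ := y
  obtain ⟨i', a'⟩ := x'
  obtain ⟨j', b'⟩ := y'
  dsimp only at hx hy hx₂ hy₂ hx₂' hy₂'
  subst hx hy hx₂ hy₂ hx₂' hy₂'
  exact ⟨rfl, rfl⟩

variable (T S c) in
def glueEmb (i : ι) : S i ↪g glue T S c where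
  toFun a := ⟨i, a⟩
  inj' _ _ h := eq_of_heq (Sigma.mk.inj h).2
  map_rel_iff' := glue_adj_mk_mk

lemma glue_isBridge (hT : T.IsAcyclic) {x y : Σ i, κ i} (h : (glue T S c).Adj x y)
    (hne : x.1 ≠ y.1) : (glue T S c).IsBridge s(x, y) := by
  rw [isBridge_iff_forall_walk_mem_edges]
  intro p
  -- the projection of `p` to `T` crosses the edge `x.1 y.1`, over which `s(x, y)` is the only edge
  obtain ⟨hxy, hx, hy⟩ := glue_adj_of_fst_ne h hne
  obtain ⟨q, hq⟩ := p.exists_edges_subset_map Sigma.fst fun u v huv => by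
    by_cases h : u.1 = v.1
    · exact .inl h
    · exact .inr (glue_adj_of_fst_ne huv h).1
  obtain ⟨e, he, hee⟩ := List.mem_map.mp
    (hq (isBridge_iff_forall_walk_mem_edges.mp (isAcyclic_iff_forall_adj_isBridge.mp hT hxy) q))
  induction e using Sym2.ind with
  | h u v =>
    have huv := p.adj_of_mem_edges he
    rcases Sym2.eq_iff.mp hee with ⟨hu, hv⟩ | ⟨hu, hv⟩
    · obtain ⟨rfl, rfl⟩ := glue_eq_of_adj_of_fst_eq huv h hu hv (hu ▸ hv ▸ hne)
      exact he
    · obtain ⟨rfl, rfl⟩ := glue_eq_of_adj_of_fst_eq huv.symm h hv hu (by rw [hv, hu]; exact hne)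
      rwa [Sym2.eq_swap]

lemma glue_isAcyclic (hT : T.IsAcyclic) (hS : ∀ i, (S i).IsAcyclic) : (glue T S c).IsAcyclic := by
  classical
  intro v p hp
  by_cases hfib : ∀ x ∈ p.support, x.1 = v.1
  · refine hp.not_support_subset_of_isAcyclic_induce
      ((glueEmb T S c v.1).isoInduceRange.isAcyclic_iff.mp (hS v.1)) fun x hx => ?_
    obtain ⟨i, a⟩ := x
    obtain rfl : i = v.1 := hfib _ hx
    exact ⟨a, rfl⟩
  · simp only [not_forall] at hfib
    obtain ⟨y, hy, hyv⟩ := hfib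
    obtain ⟨d, hd, hd₁, hd₂⟩ :=
      (p.takeUntil y hy).exists_boundary_dart {x | x.1 = v.1} rfl hyv
    refine (glue_isBridge hT d.adj fun h => hd₂ (h.symm.trans hd₁)).notMem_edges_of_isCycle hp ?_
    exact List.mem_map_of_mem (p.darts_takeUntil_subset_darts hy hd)

lemma glue_induce_preconnected {U : Set ι} (hU : (T.induce U).Preconnected)
    {W : ∀ i, Set (κ i)} (hWU : ∀ i, (W i).Nonempty → i ∈ U)
    (hW : ∀ i, ((S i).induce (W i)).Preconnected)
    (hc : ∀ i j, i ∈ U → j ∈ U → T.Adj i j → c i j ∈ W i) :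
    ((glue T S c).induce {x : Σ i, κ i | x.2 ∈ W x.1}).Preconnected := by
  have within : ∀ i (a b : κ i) (ha : a ∈ W i) (hb : b ∈ W i),
      ((glue T S c).induce {x : Σ i, κ i | x.2 ∈ W x.1}).Reachable ⟨⟨i, a⟩, ha⟩ ⟨⟨i, b⟩, hb⟩ :=
    fun i a b ha hb => (hW i ⟨a, ha⟩ ⟨b, hb⟩).map
      (⟨fun z => ⟨⟨i, z.1⟩, z.2⟩, fun h => glue_adj_mk_mk.mpr h⟩ :
        (S i).induce (W i) →g (glue T S c).induce {x : Σ i, κ i | x.2 ∈ W x.1})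
  have along : ∀ (i j : U) (w : (T.induce U).Walk i j) (a b) (ha : a ∈ W i) (hb : b ∈ W j),
      ((glue T S c).induce {x : Σ i, κ i | x.2 ∈ W x.1}).Reachable ⟨⟨i, a⟩, ha⟩ ⟨⟨j, b⟩, hb⟩ := by
    intro i j w
    induction w with
    | nil => exact within _
    | @cons i i' j h w ih =>
      intro a b ha hb
      have hc₁ := hc i i' i.2 i'.2 h
      have hc₂ := hc i' i i'.2 i.2 h.symm
      exact (within i a _ ha hc₁).trans
        ((Adj.reachable (.inr ⟨h, rfl, rfl⟩ : (glue T S c).Adj ⟨i, c i i'⟩ ⟨i', c i' i⟩)).trans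
          (ih _ b hc₂ hb))
  rintro ⟨⟨i, a⟩, ha⟩ ⟨⟨j, b⟩, hb⟩
  obtain ⟨w⟩ := hU ⟨i, hWU i ⟨a, ha⟩⟩ ⟨j, hWU j ⟨b, hb⟩⟩
  exact along _ _ w a b ha hb

lemma glue_connected (hT : T.Connected) (hS : ∀ i, (S i).Connected) :
    (glue T S c).Connected := by
  have h := glue_induce_preconnected (c := c) (W := fun _ => Set.univ)
    ((induceUnivIso T).preconnected_iff.mpr hT.preconnected) (fun _ _ => trivial)
    (fun i => (induceUnivIso (S i)).preconnected_iff.mpr (hS i).preconnected)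
    fun _ _ _ _ _ => trivial
  have : Nonempty (Σ i, κ i) := ⟨⟨hT.nonempty.some, (hS _).nonempty.some⟩⟩
  exact ⟨fun x y => (h ⟨x, trivial⟩ ⟨y, trivial⟩).map (Embedding.induce _).toHom⟩

end SimpleGraph

namespace IsTreeDecomp

variable {V ι : Type} {G : SimpleGraph V} {T : SimpleGraph ι} {A : ι → Set V}

lemma preconnected_induce_mem_image_val {A : Set V} {κ : Type} {S : SimpleGraph κ}
    {β : κ → Set A} (htd : IsTreeDecomp (G.induce A) S β) (v : V) :
    (S.induce {s | v ∈ Subtype.val '' β s}).Preconnected := by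
  obtain ⟨-, -, -, -, hsub⟩ := htd
  by_cases hv : v ∈ A
  · have hW : {s | v ∈ Subtype.val '' β s} = {s | ⟨v, hv⟩ ∈ β s} := by
      ext s
      simp [hv]
    rw [hW]
    exact (hsub ⟨v, hv⟩).preconnected
  · have hW : {s | v ∈ Subtype.val '' β s} = ∅ := by
      ext s
      simp [hv]
    rw [hW]
    exact .of_subsingleton

lemma glue (htd : IsTreeDecomp G T A) {κ : ι → Type} {S : ∀ i, SimpleGraph (κ i)}
    {β : ∀ i, κ i → Set (A i)} (hS : ∀ i, IsTreeDecomp (G.induce (A i)) (S i) (β i))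
    (c : ∀ i, ι → κ i) (hc : ∀ i j, T.Adj i j → Subtype.val ⁻¹' A j ⊆ β i (c i j)) :
    IsTreeDecomp G (T.glue S c) fun x => Subtype.val '' β x.1 x.2 := by
  obtain ⟨hT, hacyc, hcover, hedge, hsub⟩ := htd
  have hnode : ∀ v, ∃ x : Σ i, κ i, v ∈ Subtype.val '' β x.1 x.2 := fun v => by
    obtain ⟨i, hi⟩ := hcover v
    obtain ⟨-, -, hScover, -, -⟩ := hS i
    obtain ⟨s, hs⟩ := hScover ⟨v, hi⟩
    exact ⟨⟨i, s⟩, _, hs, rfl⟩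
  refine ⟨glue_connected hT fun i => (hS i).1, glue_isAcyclic hacyc fun i => (hS i).2.1,
    hnode, fun u v huv => ?_, fun v => ?_⟩
  · obtain ⟨i, hu, hv⟩ := hedge u v huv
    obtain ⟨-, -, -, hSedge, -⟩ := hS i
    obtain ⟨s, hus, hvs⟩ := hSedge ⟨u, hu⟩ ⟨v, hv⟩ huv
    exact ⟨⟨i, s⟩, ⟨_, hus, rfl⟩, ⟨_, hvs, rfl⟩⟩
  · obtain ⟨x, hx⟩ := hnode v
    refine @Connected.mk _ _ ?_ ⟨⟨x, hx⟩⟩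
    exact glue_induce_preconnected (W := fun i => {s | v ∈ Subtype.val '' β i s})
      (hsub v).preconnected (fun i ⟨s, w, _, hwv⟩ => hwv ▸ w.2)
      (fun i => (hS i).preconnected_induce_mem_image_val v)
      fun i j hi hj hij => ⟨⟨v, hi⟩, hc i j hij hj, rfl⟩

lemma tw_le_of_isClique_inter [Finite V] (htd : IsTreeDecomp G T A)
    (hcl : ∀ i j, T.Adj i j → G.IsClique (A i ∩ A j)) {k : ℕ}
    (hk : ∀ i, tw (G.induce (A i)) ≤ k) : tw G ≤ k := by
  choose κ S β hS hβ using fun i => exists_isTreeDecomp_ncard_le_tw (G.induce (A i))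
  have hc : ∀ i j, ∃ t, T.Adj i j → Subtype.val ⁻¹' A j ⊆ β i t := fun i j => by
    by_cases hij : T.Adj i j
    · obtain ⟨t, ht⟩ := (hS i).exists_subset_bag_of_isClique (Set.toFinite _)
        fun x hx y hy hxy => hcl i j hij ⟨x.2, hx⟩ ⟨y.2, hy⟩ (Subtype.val_injective.ne hxy)
      exact ⟨t, fun _ => ht⟩
    · exact ⟨(hS i).1.nonempty.some, (absurd · hij)⟩
  choose c hc using hc
  refine tw_le_of_isTreeDecomp (htd.glue hS c hc) fun x => ?_
  rw [Set.ncard_image_of_injective _ Subtype.val_injective]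
  exact (hβ x.1 x.2).trans (Nat.add_le_add_right (hk x.1) 1)

end IsTreeDecomp

/-- if every induced separator of a tree-decomposition of `G` is a
clique of `G`, then `tw G` equals the maximum over nodes `i` of `tw G_i`, where
`G_i` is `G[A_i]` with `N(C)` completed into a clique for every component `C` of
`G \ A_i`. -/
theorem stmt18 {V ι : Type} [Finite V] [Finite ι] (G : SimpleGraph V)
    (T : SimpleGraph ι) (bag : ι → Set V) (htd : IsTreeDecomp G T bag)
    (hcl : ∀ i j, T.Adj i j → G.IsClique (bag i ∩ bag j)) :
    IsGreatest {k | ∃ i, k = tw (realized G (bag i))} (tw G) := by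
  have hGi : ∀ i, tw (realized G (bag i)) = tw (G.induce (bag i)) := fun i => by
    rw [htd.realized_eq_induce hcl i]
  have hle : ∀ i, tw (G.induce (bag i)) ≤ tw G :=
    fun i => tw_le_tw_of_embedding (Embedding.induce _)
  have : Nonempty ι := htd.1.nonempty
  obtain ⟨i₀, hi₀⟩ := Finite.exists_max fun i => tw (G.induce (bag i))
  refine ⟨⟨i₀, ?_⟩, ?_⟩
  · rw [hGi]
    exact le_antisymm (htd.tw_le_of_isClique_inter hcl hi₀) (hle i₀)
  · rintro k ⟨i, rfl⟩
    rw [hGi]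
    exact hle i
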